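/- arXiv:1810.03133 — 2 statements merged into one kernel-verified Lean document; each statement's English description precedes it below -/
import Mathlib

section
/- Let M be a monotone Möbius structure on S¹. For each harmonicity type i ∈ {1,2,3} and each nondegenerate triple t=(x₁,x₂,x₃), there exists a unique point y ∈ S¹ such that the 4-tuple (y,x₁,x₂,x₃) is harmonic of type i; concretely, for type corresponding to infinitely remote point x_i, y is the unique midpoint: |x_{i+1} y|_{x_i} = |y x_{i+2}|_{x_i}. Moreover the pairs (x_i, y) and (x_{i+1}, x_{i+2}) separate each other. -/
open scoped Classical

section Mobius

variable {X : Type*}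

/-- The pairs `(x,y)` and `(z,u)` separate each other on the circularly ordered set `X`:
`z` and `u` lie on different open arcs determined by `x` and `y`. -/
def PairSeparates [CircularOrder X] (x y z u : X) : Prop :=
  (sbtw x z y ∧ sbtw y u x) ∨ (sbtw x u y ∧ sbtw y z x)

/-- The pair `(d₁,d₂)` separates the pairs `(b₁,b₂)` and `(c₁,c₂)`: the latter two pairs lie
on different open arcs determined by `(d₁,d₂)`. -/
def ArcSepPairs [CircularOrder X] (d₁ d₂ b₁ b₂ c₁ c₂ : X) : Prop :=
  (sbtw d₁ b₁ d₂ ∧ sbtw d₁ b₂ d₂ ∧ sbtw d₂ c₁ d₁ ∧ sbtw d₂ c₂ d₁) ∨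
  (sbtw d₁ c₁ d₂ ∧ sbtw d₁ c₂ d₂ ∧ sbtw d₂ b₁ d₁ ∧ sbtw d₂ b₂ d₁)

/-- Two pairs `(b₁,b₂)` and `(c₁,c₂)` of points are in the strong causal relation:
either of them lies entirely in one open arc determined by the other. -/
def StrongCausal [CircularOrder X] (b₁ b₂ c₁ c₂ : X) : Prop :=
  (sbtw b₁ c₁ b₂ ∧ sbtw b₁ c₂ b₂) ∨ (sbtw b₂ c₁ b₁ ∧ sbtw b₂ c₂ b₁) ∨
  (sbtw c₁ b₁ c₂ ∧ sbtw c₁ b₂ c₂) ∨ (sbtw c₂ b₁ c₁ ∧ sbtw c₂ b₂ c₁)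

/-- The topology generated by open balls of the semi-metrics with infinitely remote points,
centered at finite points. `D ω x y` denotes `|xy|` in the semi-metric with infinitely remote
point `ω`. -/
def MTopology (D : X → X → X → ℝ) : TopologicalSpace X :=
  TopologicalSpace.generateFrom
    {s | ∃ ω x r, x ≠ ω ∧ s = {y | y ≠ ω ∧ D ω x y < r}}

/-- A (ptolemaic) monotone Möbius structure on a circle `X`, presented by the family of its
semi-metrics with infinitely remote points: `D ω x y` is the distance `|xy|_ω` in the
semi-metric with infinitely remote point `ω` (defined for `x, y ≠ ω`).  The semi-metrics
are pairwise related by metric inversion (up to homothety), every one of them satisfies the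
Ptolemy inequality, the monotonicity axiom (M) holds, the M-topology is the given topology
of `X`, and `X` is homeomorphic to the circle. -/
structure MonotoneMobius (X : Type*) [CircularOrder X] [t : TopologicalSpace X] where
  D : X → X → X → ℝ
  symm : ∀ ω x y, D ω x y = D ω y x
  refl : ∀ ω x, D ω x x = 0
  pos : ∀ ω x y, x ≠ y → x ≠ ω → y ≠ ω → 0 < D ω x y
  inversion : ∀ ω ω', ω ≠ ω' → ∃ c : ℝ, 0 < c ∧ ∀ x y, x ≠ ω → y ≠ ω → x ≠ ω' → y ≠ ω' →
    D ω' x y = c * D ω x y / (D ω x ω' * D ω y ω')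
  ptolemy : ∀ ω x y z u, x ≠ ω → y ≠ ω → z ≠ ω → u ≠ ω →
    D ω x y * D ω z u ≤ D ω x z * D ω y u + D ω x u * D ω y z
  mono : ∀ ω x y z u, x ≠ ω → y ≠ ω → z ≠ ω → u ≠ ω → PairSeparates x y z u →
    D ω x z * D ω y u < D ω x y * D ω z u ∧ D ω x u * D ω y z < D ω x y * D ω z u
  mtop : MTopology D = t
  circle : Nonempty (X ≃ₜ AddCircle (1 : ℝ))

variable [CircularOrder X] [TopologicalSpace X]

/-- The 4-tuple `(x,y,z,u)` is harmonic (of the first type): `|xz||yu| = |xu||yz|` in any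
semi-metric of the Möbius structure. -/
def MonotoneMobius.Harmonic (M : MonotoneMobius X) (x y z u : X) : Prop :=
  ∀ ω, ω ≠ x → ω ≠ y → ω ≠ z → ω ≠ u →
    M.D ω x z * M.D ω y u = M.D ω x u * M.D ω y z

/-- The distance `|q q'| = |ln ((|xp'||yp|)/(|xp||yp'|))|` between two harmonic pairs
`q = ((x,y),(p,·))` and `q' = ((x,y),(p',·))` with common axis `(x,y)`; computed here in the
semi-metric with infinitely remote point `x`, where it equals `|ln (|yp|_x / |yp'|_x)|`. -/
noncomputable def MonotoneMobius.lineDist (M : MonotoneMobius X) (x y p p' : X) : ℝ :=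
  |Real.log (M.D x y p / M.D x y p')|

end Mobius

/-!
With `ω = x_i`, metric inversion reduces harmonicity of type `i` to the midpoint condition
`|x_{i+1} y|_ω = |x_{i+2} y|_ω`. Transported to `|··|_ω`, axiom (M) says that
`y ↦ |ay|_ω - |by|_ω` is strictly increasing along the arc from `a` to `b` avoiding `ω` and
that outside this arc the two distances cannot agree; this gives the separation claim and
uniqueness. Existence is the intermediate value theorem on the connected set `S¹ ∖ {ω}`:
`|a·|_ω` is continuous there because its sublevel sets are basic open sets of the M-topology,
and its superlevel sets are sublevel sets of `|ω·|_a`, as `|au|_ω |ωu|_a` does not depend on `u`.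
-/

theorem AddCircle.isPreconnected_compl_singleton {p : ℝ} [Fact (0 < p)] (z : AddCircle p) :
    IsPreconnected ({z}ᶜ : Set (AddCircle p)) := by
  obtain ⟨x, rfl⟩ := QuotientAddGroup.mk_surjective z
  have h := (AddCircle.openPartialHomeomorphCoe p x).image_source_eq_target
  simp only [AddCircle.openPartialHomeomorphCoe_source, AddCircle.openPartialHomeomorphCoe_target,
    AddCircle.openPartialHomeomorphCoe_apply] at h
  rw [← h]
  exact isPreconnected_Ioo.image _ (AddCircle.continuous_mk' p).continuousOn

instance AddCircle.infinite {p : ℝ} [Fact (0 < p)] : Infinite (AddCircle p) :=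
  have : Infinite (Set.Ico (0 : ℝ) (0 + p)) :=
    Set.infinite_coe_iff.mpr (Set.Ico_infinite (by simpa using Fact.out))
  Infinite.of_injective _ (AddCircle.equivIco p 0).symm.injective

section CircularOrder
variable {α : Type*} [CircularOrder α] {a b c x y z u : α}

theorem sbtw_or_sbtw_of_ne (hab : a ≠ b) (hbc : b ≠ c) (hca : c ≠ a) :
    sbtw a b c ∨ sbtw c b a := by
  by_contra! h
  rcases (btw_iff_not_sbtw.mpr h.2).antisymm (btw_iff_not_sbtw.mpr h.1) with h' | h' | h'
  exacts [hab h', hbc h', hca h']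

theorem SBtw.sbtw.ne (h : sbtw a b c) : a ≠ b ∧ b ≠ c ∧ c ≠ a :=
  ⟨fun e => sbtw_irrefl_left (e ▸ h), fun e => sbtw_irrefl_right (e ▸ h),
    fun e => sbtw_irrefl_left_right (e ▸ h)⟩

theorem PairSeparates.comm (h : PairSeparates x y z u) : PairSeparates z u x y := by
  rcases h with ⟨hxzy, hyux⟩ | ⟨hxuy, hyzx⟩
  · exact Or.inr ⟨sbtw_trans_right hyux hxzy.cyclic_right |>.cyclic_left.cyclic_left,
      sbtw_trans_right hxzy hyux.cyclic_right |>.cyclic_left.cyclic_left⟩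
  · exact Or.inl ⟨sbtw_trans_right hxuy hyzx.cyclic_right |>.cyclic_left.cyclic_left,
      sbtw_trans_right hyzx hxuy.cyclic_right |>.cyclic_left.cyclic_left⟩

theorem PairSeparates.swap_right (h : PairSeparates x y z u) : PairSeparates x y u z := h.symm

theorem PairSeparates.ne (h : PairSeparates x y z u) :
    x ≠ y ∧ x ≠ z ∧ x ≠ u ∧ y ≠ z ∧ y ≠ u ∧ z ≠ u := by
  rcases h with ⟨h₁, h₂⟩ | ⟨h₁, h₂⟩
  · exact ⟨h₁.ne.2.2.symm, h₁.ne.1, h₂.ne.2.1.symm, h₁.ne.2.1.symm, h₂.ne.1,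
      fun e => sbtw_asymm h₁ (e ▸ h₂)⟩
  · exact ⟨h₁.ne.2.2.symm, h₂.ne.2.1.symm, h₁.ne.1, h₂.ne.1, h₁.ne.2.1.symm,
      fun e => sbtw_asymm h₁ (e ▸ h₂)⟩

theorem pairSeparates_trichotomy (hxy : x ≠ y) (hxz : x ≠ z) (hxu : x ≠ u) (hyz : y ≠ z)
    (hyu : y ≠ u) (hzu : z ≠ u) :
    PairSeparates x y z u ∨ PairSeparates x z y u ∨ PairSeparates x u y z := by
  rcases sbtw_or_sbtw_of_ne hxz hyz.symm hxy.symm with hxzy | hyzx <;>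
    rcases sbtw_or_sbtw_of_ne hxu hyu.symm hxy.symm with hxuy | hyux
  · rcases sbtw_or_sbtw_of_ne hxz hzu hxu.symm with hxzu | hxuz
    · exact Or.inr (Or.inr (Or.inr ⟨hxzu, hxuy.cyclic_left⟩))
    · exact Or.inr (Or.inl (Or.inr ⟨hxuz.cyclic_left.cyclic_left, hxzy.cyclic_left⟩))
  · exact Or.inl (Or.inl ⟨hxzy, hyux⟩)
  · exact Or.inl (Or.inr ⟨hxuy, hyzx⟩)
  · rcases sbtw_or_sbtw_of_ne hyz hzu hyu.symm with hyzu | huzy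
    · exact Or.inr (Or.inl (Or.inl ⟨hyzx.cyclic_left.cyclic_left,
        (hyux.cyclic_left.cyclic_left.trans_left hyzu).cyclic_left⟩))
    · exact Or.inr (Or.inr (Or.inl ⟨hyux.cyclic_left.cyclic_left,
        (sbtw_trans_right hyzx.cyclic_left huzy.cyclic_left).cyclic_left.cyclic_left⟩))

end CircularOrder

namespace MonotoneMobius

variable {X : Type*} [CircularOrder X] [TopologicalSpace X] {M : MonotoneMobius X}

theorem infinite (M : MonotoneMobius X) : Infinite X := by
  obtain ⟨e⟩ := M.circle
  exact Infinite.of_injective e.symm e.symm.injective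

theorem t1Space (M : MonotoneMobius X) : T1Space X := by
  obtain ⟨e⟩ := M.circle
  exact e.symm.t1Space

theorem isPreconnected_ne (M : MonotoneMobius X) (ω : X) : IsPreconnected {y | y ≠ ω} := by
  obtain ⟨e⟩ := M.circle
  have h : {y | y ≠ ω} = e ⁻¹' {e ω}ᶜ := by ext; simp
  rw [h, e.isPreconnected_preimage]
  exact AddCircle.isPreconnected_compl_singleton _

theorem D_nonneg {ω x y : X} (hx : x ≠ ω) (hy : y ≠ ω) : 0 ≤ M.D ω x y := by
  rcases eq_or_ne x y with rfl | hxy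
  · exact (M.refl ω x).ge
  · exact (M.pos ω x y hxy hx hy).le

/-- Axiom (M) is stated with a remote point `ω` off the four points; moving `ω` to `s` by
metric inversion turns it into a comparison in the semi-metric `|··|_s`. -/
theorem D_lt_D_of_pairSeparates {p q r s : X} (h : PairSeparates p r q s) :
    M.D s p q < M.D s p r := by
  obtain ⟨-, -, hps, -, hrs, hqs⟩ := h.ne
  have := M.infinite
  obtain ⟨ω, hω⟩ := Infinite.exists_notMem_finset ({p, q, r, s} : Finset X)
  obtain ⟨hωp, hωq, hωr, hωs⟩ : ω ≠ p ∧ ω ≠ q ∧ ω ≠ r ∧ ω ≠ s := by simpa using hω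
  have hmono := (M.mono ω p r q s hωp.symm hωr.symm hωq.symm hωs.symm h).1
  obtain ⟨c, hc, hinv⟩ := M.inversion ω s hωs
  have hp := M.pos ω p s hps hωp.symm hωs.symm
  have hq := M.pos ω q s hqs hωq.symm hωs.symm
  have hr := M.pos ω r s hrs hωr.symm hωs.symm
  rw [hinv p q hωp.symm hωq.symm hps hqs, hinv p r hωp.symm hωr.symm hps hrs,
    div_lt_div_iff₀ (by positivity) (by positivity)]
  nlinarith [mul_pos hc hp]

theorem D_sub_D_lt_of_sbtw {ω a b y y' : X} (hyy' : sbtw a y y') (hy'b : sbtw a y' b)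
    (hω : sbtw b ω a) : M.D ω a y - M.D ω b y < M.D ω a y' - M.D ω b y' := by
  have hyb : sbtw a y b := sbtw_trans_right hyy' hy'b
  have ha : M.D ω a y < M.D ω a y' :=
    M.D_lt_D_of_pairSeparates (Or.inl ⟨hyy', hy'b.cyclic_left.trans_left hω⟩)
  have hb : M.D ω b y' < M.D ω b y :=
    M.D_lt_D_of_pairSeparates <| Or.inr ⟨sbtw_trans_right hω hyb.cyclic_right,
      (sbtw_trans_right hy'b.cyclic_left hyy'.cyclic_right).cyclic_left.cyclic_left⟩
  linarith

theorem eq_of_sbtw_of_D_eq {ω a b y y' : X} (hy : sbtw a y b) (hy' : sbtw a y' b)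
    (hω : sbtw b ω a) (hDy : M.D ω a y = M.D ω b y) (hDy' : M.D ω a y' = M.D ω b y') :
    y = y' := by
  by_contra hne
  rcases sbtw_or_sbtw_of_ne hy.ne.1 hne hy'.ne.1.symm with h | h
  · linarith [M.D_sub_D_lt_of_sbtw h hy' hω]
  · linarith [M.D_sub_D_lt_of_sbtw h.cyclic_left.cyclic_left hy hω]

theorem pairSeparates_of_D_eq {ω a b y : X} (hωy : ω ≠ y) (hωa : ω ≠ a) (hωb : ω ≠ b)
    (hya : y ≠ a) (hyb : y ≠ b) (hab : a ≠ b) (hy : M.D ω a y = M.D ω b y) :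
    PairSeparates ω y a b := by
  rw [M.symm ω a y, M.symm ω b y] at hy
  rcases pairSeparates_trichotomy hωy hωa hωb hya hyb hab with h | h | h
  · exact h
  · exact absurd hy (M.D_lt_D_of_pairSeparates h.comm.swap_right).ne
  · exact absurd hy (M.D_lt_D_of_pairSeparates h.comm.swap_right).ne'

theorem eq_of_pairSeparates_of_D_eq {ω a b y y' : X} (hsep : PairSeparates ω y a b)
    (hsep' : PairSeparates ω y' a b) (hy : M.D ω a y = M.D ω b y)
    (hy' : M.D ω a y' = M.D ω b y') : y = y' := by
  rcases hsep.comm.swap_right with ⟨hayb, hbωa⟩ | ⟨haωb, hbya⟩ <;>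
    rcases hsep'.comm.swap_right with ⟨hay'b, hbωa'⟩ | ⟨haωb', hby'a⟩
  · exact M.eq_of_sbtw_of_D_eq hayb hay'b hbωa hy hy'
  · exact absurd haωb' (sbtw_asymm hbωa)
  · exact absurd hbωa' (sbtw_asymm haωb)
  · exact M.eq_of_sbtw_of_D_eq hbya hby'a haωb hy.symm hy'.symm

theorem D_mul_D_eq_of_D_eq {ω₀ a b y ω : X} (hωω₀ : ω ≠ ω₀) (hωa : ω ≠ a) (hωb : ω ≠ b)
    (hωy : ω ≠ y) (haω₀ : a ≠ ω₀) (hbω₀ : b ≠ ω₀) (hyω₀ : y ≠ ω₀)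
    (hy : M.D ω₀ a y = M.D ω₀ b y) :
    M.D ω a y * M.D ω ω₀ b = M.D ω y b * M.D ω ω₀ a := by
  obtain ⟨c, hc, hinv⟩ := M.inversion ω ω₀ hωω₀
  have hDa := M.pos ω a ω₀ haω₀ hωa.symm hωω₀.symm
  have hDy := M.pos ω y ω₀ hyω₀ hωy.symm hωω₀.symm
  have hDb := M.pos ω b ω₀ hbω₀ hωb.symm hωω₀.symm
  rw [hinv a y hωa.symm hωy.symm haω₀ hyω₀, hinv b y hωb.symm hωy.symm hbω₀ hyω₀,
    div_eq_div_iff (by positivity) (by positivity)] at hy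
  rw [M.symm ω ω₀ b, M.symm ω ω₀ a, M.symm ω y b]
  apply mul_left_cancel₀ (show c * M.D ω y ω₀ ≠ 0 by positivity)
  linear_combination hy

/-- Inverting `|··|_ω` at `a` and `|··|_a` at `ω` and composing returns `|··|_ω`; this forces
`|au|_ω |ωu|_a` to be independent of `u`. -/
theorem exists_D_mul_D_eq_const {ω a : X} (haω : a ≠ ω) :
    ∃ k > 0, ∀ u, u ≠ a → u ≠ ω → M.D ω a u * M.D a ω u = k := by
  obtain ⟨c₁, -, hinv₁⟩ := M.inversion ω a haω.symm
  obtain ⟨c₂, -, hinv₂⟩ := M.inversion a ω haω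
  have hpos : ∀ u, u ≠ a → u ≠ ω → 0 < M.D ω a u * M.D a ω u := fun u hua huω =>
    mul_pos (M.pos ω a u hua.symm haω huω) (M.pos a ω u huω.symm haω.symm hua)
  have hprod : ∀ x y, x ≠ a → x ≠ ω → y ≠ a → y ≠ ω → x ≠ y →
      (M.D ω a x * M.D a ω x) * (M.D ω a y * M.D a ω y) = c₁ * c₂ := by
    intro x y hxa hxω hya hyω hxy
    have h := hinv₂ x y hxa hya hxω hyω
    rw [hinv₁ x y hxω hyω hxa hya] at h
    have hDxy := M.pos ω x y hxy hxω hyω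
    have hDxa := M.pos ω x a hxa hxω haω
    have hDya := M.pos ω y a hya hyω haω
    have hDxω := M.pos a x ω hxω hxa haω.symm
    have hDyω := M.pos a y ω hyω hya haω.symm
    rw [M.symm ω a x, M.symm a ω x, M.symm ω a y, M.symm a ω y]
    field_simp at h
    apply mul_left_cancel₀ hDxy.ne'
    linear_combination M.D ω x y * h
  have := M.infinite
  obtain ⟨x, hx⟩ := Infinite.exists_notMem_finset ({a, ω} : Finset X)
  obtain ⟨hxa, hxω⟩ : x ≠ a ∧ x ≠ ω := by simpa using hx
  refine ⟨_, hpos x hxa hxω, fun u hua huω => ?_⟩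
  obtain ⟨w, hw⟩ := Infinite.exists_notMem_finset ({a, ω, u, x} : Finset X)
  obtain ⟨hwa, hwω, hwu, hwx⟩ : w ≠ a ∧ w ≠ ω ∧ w ≠ u ∧ w ≠ x := by simpa using hw
  refine mul_right_cancel₀ (hpos w hwa hwω).ne' ?_
  rw [hprod u w hua huω hwa hwω hwu.symm, hprod x w hxa hxω hwa hwω hwx.symm]

theorem isOpen_D_lt {ω a : X} (haω : a ≠ ω) (r : ℝ) : IsOpen {y | y ≠ ω ∧ M.D ω a y < r} := by
  have h : @IsOpen X (MTopology M.D) {y | y ≠ ω ∧ M.D ω a y < r} :=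
    TopologicalSpace.isOpen_generateFrom_of_mem ⟨ω, a, r, haω, rfl⟩
  rwa [M.mtop] at h

theorem isOpen_lt_D {ω a : X} (haω : a ≠ ω) {r : ℝ} (hr : 0 < r) :
    IsOpen {y | y ≠ ω ∧ r < M.D ω a y} := by
  have := M.t1Space
  obtain ⟨k, -, hk⟩ := M.exists_D_mul_D_eq_const haω
  suffices h : {y | y ≠ ω ∧ r < M.D ω a y} = {y | y ≠ a ∧ M.D a ω y < k / r} ∩ {ω}ᶜ by
    rw [h]
    exact (M.isOpen_D_lt haω.symm _).inter isOpen_compl_singleton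
  ext y
  refine ⟨fun ⟨hyω, hry⟩ => ?_, fun ⟨⟨hya, hyk⟩, (hyω : y ≠ ω)⟩ => ⟨hyω, ?_⟩⟩
  · have hya : y ≠ a := by rintro rfl; linarith [M.refl ω y]
    refine ⟨⟨hya, ?_⟩, hyω⟩
    rw [lt_div_iff₀ hr, ← hk y hya hyω]
    nlinarith [M.pos a ω y hyω.symm haω.symm hya]
  · rw [lt_div_iff₀ hr, ← hk y hya hyω] at hyk
    nlinarith [M.pos a ω y hyω.symm haω.symm hya]

theorem continuousOn_D {ω a : X} (haω : a ≠ ω) : ContinuousOn (M.D ω a) {y | y ≠ ω} := by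
  intro x hx
  refine tendsto_order.2 ⟨fun b hb => ?_, fun b hb => ?_⟩
  · rcases lt_or_ge b 0 with hb0 | hb0
    · filter_upwards [self_mem_nhdsWithin] with y hy
      exact hb0.trans_le (M.D_nonneg haω hy)
    · obtain ⟨r, hbr, hrx⟩ := exists_between hb
      filter_upwards [mem_nhdsWithin_of_mem_nhds
        ((M.isOpen_lt_D haω (hb0.trans_lt hbr)).mem_nhds ⟨hx, hrx⟩)] with y hy
      exact hbr.trans hy.2
  · filter_upwards [mem_nhdsWithin_of_mem_nhds ((M.isOpen_D_lt haω b).mem_nhds ⟨hx, hb⟩)]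
      with y hy
    exact hy.2

theorem exists_D_eq_D {ω a b : X} (haω : a ≠ ω) (hbω : b ≠ ω) (hab : a ≠ b) :
    ∃ y, y ≠ ω ∧ y ≠ a ∧ y ≠ b ∧ M.D ω a y = M.D ω b y := by
  have hpos := M.pos ω a b hab haω hbω
  have h0 : (0 : ℝ) ∈ Set.Icc (M.D ω a a - M.D ω b a) (M.D ω a b - M.D ω b b) := by
    simp [M.refl, M.symm ω b a, hpos.le]
  obtain ⟨y, hyω, hy⟩ := (M.isPreconnected_ne ω).intermediate_value haω hbω
    ((M.continuousOn_D haω).sub (M.continuousOn_D hbω)) h0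
  have hy : M.D ω a y = M.D ω b y := sub_eq_zero.mp hy
  refine ⟨y, hyω, ?_, ?_, hy⟩ <;> rintro rfl
  · linarith [M.refl ω y, M.symm ω b y]
  · linarith [M.refl ω y, M.symm ω a y]

end MonotoneMobius

/-- Let `M` be a monotone Möbius structure on the circle. For each
harmonicity type `i ∈ {1,2,3}` (indexed here by `i : Fin 3`) and each nondegenerate triple
`t = (x₁,x₂,x₃)`, there exists a unique point `y` such that the 4-tuple `(y,x₁,x₂,x₃)` is
harmonic of type `i`: `|x_{i+1} y||x_i x_{i+2}| = |y x_{i+2}||x_i x_{i+1}|` in any semi-metric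
of the structure; concretely, `y` is the unique midpoint in the semi-metric with infinitely
remote point `x_i`: `|x_{i+1} y|_{x_i} = |y x_{i+2}|_{x_i}`. Moreover, the pairs `(x_i, y)`
and `(x_{i+1}, x_{i+2})` separate each other. -/
theorem stmt8 {X : Type*} [CircularOrder X] [TopologicalSpace X]
    (M : MonotoneMobius X) (i : Fin 3) (t : Fin 3 → X) (hinj : Function.Injective t) :
    ∃! y : X,
      (∀ j, y ≠ t j) ∧
      (∀ ω, (∀ j, ω ≠ t j) → ω ≠ y →
        M.D ω (t (i + 1)) y * M.D ω (t i) (t (i + 2)) =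
          M.D ω y (t (i + 2)) * M.D ω (t i) (t (i + 1))) ∧
      M.D (t i) (t (i + 1)) y = M.D (t i) y (t (i + 2)) ∧
      PairSeparates (t i) y (t (i + 1)) (t (i + 2)) := by
  have hcover : ∀ j : Fin 3, j = i ∨ j = i + 1 ∨ j = i + 2 := by revert i; decide
  have h01 : t (i + 1) ≠ t i := hinj.ne ((by decide : ∀ k : Fin 3, k + 1 ≠ k) i)
  have h02 : t (i + 2) ≠ t i := hinj.ne ((by decide : ∀ k : Fin 3, k + 2 ≠ k) i)
  have h12 : t (i + 1) ≠ t (i + 2) := hinj.ne ((by decide : ∀ k : Fin 3, k + 1 ≠ k + 2) i)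
  obtain ⟨y, hy0, hy1, hy2, hmid⟩ := M.exists_D_eq_D h01 h02 h12
  have hsep := M.pairSeparates_of_D_eq hy0.symm h01.symm h02.symm hy1 hy2 h12 hmid
  refine ⟨y, ⟨fun j => ?_, fun ω hω hωy => ?_, hmid.trans (M.symm _ _ _), hsep⟩, ?_⟩
  · rcases hcover j with rfl | rfl | rfl <;> assumption
  · exact M.D_mul_D_eq_of_D_eq (hω i) (hω (i + 1)) (hω (i + 2)) hωy h01 h02 hy0 hmid
  · rintro y' ⟨-, -, hmid', hsep'⟩
    exact M.eq_of_pairSeparates_of_D_eq hsep' hsep (hmid'.trans (M.symm _ _ _)) hmid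
end

section
/- Let M be a monotone Möbius structure on S¹ and let b, b' be pairs of distinct points in the strong causal relation. Then the common perpendicular is unique: there is at most one pair a such that both (a,b) and (a,b') are harmonic. -/
open scoped Classical
set_option linter.unusedSectionVars false

section CircAux
variable {α : Type*} [CircularOrder α] {a b c d : α}

lemma myrot (h : sbtw a b c) : sbtw b c a := h.cyclic_left

lemma myl1 (h1 : sbtw a b c) (h2 : sbtw b d c) : sbtw a b d :=
  (sbtw_trans_left h2.cyclic_left h1.cyclic_left.cyclic_left).cyclic_left

lemma myo3 (h1 : sbtw a b c) (h2 : sbtw a c d) : sbtw b c d :=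
  (sbtw_trans_left h2.cyclic_left.cyclic_left h1).cyclic_left

lemma mytri (hab : a ≠ b) (hbc : b ≠ c) (hac : a ≠ c) : sbtw a b c ∨ sbtw c b a := by
  rcases btw_total a b c with h | h
  · refine Or.inl (h.sbtw_of_not_btw fun h' => ?_)
    rcases btw_antisymm h h' with e | e | e
    exacts [hab e, hbc e, hac e.symm]
  · refine Or.inr (h.sbtw_of_not_btw fun h' => ?_)
    rcases btw_antisymm h h' with e | e | e
    exacts [hbc e.symm, hab e.symm, hac e]

end CircAux

section MAux
variable {X : Type*} [CircularOrder X] [TopologicalSpace X]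

lemma mob_infinite (M : MonotoneMobius X) : Infinite X := by
  obtain ⟨e⟩ := M.circle
  haveI : Fact ((0:ℝ) < 1) := ⟨one_pos⟩
  haveI : Infinite (Set.Ioc (0:ℝ) (0+1)) :=
    Set.infinite_coe_iff.2 (Set.Ioc_infinite (by norm_num))
  haveI : Infinite (AddCircle (1:ℝ)) :=
    Infinite.of_injective (fun t => (AddCircle.equivIoc (1:ℝ) (0:ℝ)).symm t)
      (Equiv.injective _)
  exact Infinite.of_injective (fun t => e.symm t) e.symm.injective

variable {M : MonotoneMobius X} {x y z u : X}

lemma harm_swap_right (h : M.Harmonic x y z u) : M.Harmonic x y u z :=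
  fun ω h1 h2 h3 h4 => (h ω h1 h2 h4 h3).symm

lemma harm_swap_left (h : M.Harmonic x y z u) : M.Harmonic y x z u :=
  fun ω h1 h2 h3 h4 => by linear_combination -(h ω h2 h1 h3 h4)

/-- positions from separation -/
lemma pos_of_sep (h : PairSeparates x y z u) :
    (sbtw z x u ∧ sbtw u y z) ∨ (sbtw z y u ∧ sbtw u x z) := by
  rcases h with ⟨h1, h2⟩ | ⟨h1, h2⟩
  · exact Or.inr ⟨myl1 (myrot h1) h2, myl1 (myrot h2) h1⟩
  · exact Or.inl ⟨myl1 (myrot h2) h1, myl1 (myrot h1) h2⟩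

/-- for 4 distinct points some pairing separates -/
lemma exists_sep {a b c d : X} (hab : a ≠ b) (hac : a ≠ c) (had : a ≠ d)
    (hbc : b ≠ c) (hbd : b ≠ d) (hcd : c ≠ d) :
    PairSeparates a b c d ∨ PairSeparates a c b d ∨ PairSeparates a d b c := by
  rcases mytri hac hbc.symm hab with hc | hc
  · rcases mytri had hbd.symm hab with hd | hd
    · rcases mytri hac hcd had with h | h
      · exact Or.inr (Or.inr (Or.inr ⟨h, myrot hd⟩))
      · exact Or.inr (Or.inl (Or.inr ⟨myrot (myrot h), myrot hc⟩))
    · exact Or.inl (Or.inl ⟨hc, hd⟩)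
  · rcases mytri had hbd.symm hab with hd | hd
    · exact Or.inl (Or.inr ⟨hd, hc⟩)
    · rcases mytri hbc hcd hbd with h | h
      · exact Or.inr (Or.inl (Or.inl ⟨myrot (myrot hc), myo3 h hd⟩))
      · exact Or.inr (Or.inr (Or.inl ⟨myrot (myrot hd), myo3 (myrot (myrot h)) hc⟩))

end MAux

section Main
variable {X : Type*} [CircularOrder X] [TopologicalSpace X]

lemma sbtw_ne12 {a b c : X} (h : sbtw a b c) : a ≠ b := by
  rintro rfl; exact sbtw_irrefl_left h

lemma sbtw_ne23 {a b c : X} (h : sbtw a b c) : b ≠ c := by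
  rintro rfl; exact sbtw_irrefl_right h

lemma sbtw_ne13 {a b c : X} (h : sbtw a b c) : a ≠ c := by
  rintro rfl; exact sbtw_irrefl_left_right h

lemma sep_of_harmEq (M : MonotoneMobius X) (ω x y z u : X)
    (nx : x ≠ ω) (ny : y ≠ ω) (nz : z ≠ ω) (nu : u ≠ ω)
    (hxy : x ≠ y) (hxz : x ≠ z) (hxu : x ≠ u) (hyz : y ≠ z) (hyu : y ≠ u) (hzu : z ≠ u)
    (hE : M.D ω x z * M.D ω y u = M.D ω x u * M.D ω y z) :
    PairSeparates x y z u := by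
  rcases exists_sep hxy hxz hxu hyz hyu hzu with h | h | h
  · exact h
  · exfalso
    have hm := (M.mono ω x z y u nx nz ny nu h).2
    rw [M.symm ω z y] at hm
    linarith [hE]
  · exfalso
    have hm := (M.mono ω x u y z nx nu ny nz h).2
    rw [M.symm ω u y] at hm
    linarith [hE]

lemma core4 (M : MonotoneMobius X) (ω z u z' u' x y x' y' : X)
    (nz : z ≠ ω) (nu : u ≠ ω) (nz' : z' ≠ ω) (nu' : u' ≠ ω)
    (nx : x ≠ ω) (ny : y ≠ ω) (nx' : x' ≠ ω) (ny' : y' ≠ ω)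
    (hxz : x ≠ z) (hxu : x ≠ u) (hxz' : x ≠ z') (hxu' : x ≠ u')
    (hyz : y ≠ z) (hyu : y ≠ u) (hyz' : y ≠ z') (hyu' : y ≠ u')
    (hx2z : x' ≠ z) (hx2u : x' ≠ u) (hx2z' : x' ≠ z') (hx2u' : x' ≠ u')
    (hy2z : y' ≠ z) (hy2u : y' ≠ u) (hy2z' : y' ≠ z') (hy2u' : y' ≠ u')
    (g1 : sbtw z z' u') (g2 : sbtw z u' u)
    (p3 : sbtw z' x u') (p5 : sbtw z' x' u')
    (q4 : sbtw u y z) (q6 : sbtw u y' z)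
    (p8 : sbtw z' x x')
    (hE1 : M.D ω x z * M.D ω y u = M.D ω x u * M.D ω y z)
    (hE2 : M.D ω x z' * M.D ω y u' = M.D ω x u' * M.D ω y z')
    (hE3 : M.D ω x' z * M.D ω y' u = M.D ω x' u * M.D ω y' z)
    (hE4 : M.D ω x' z' * M.D ω y' u' = M.D ω x' u' * M.D ω y' z') : False := by
  have dpos : ∀ p q : X, p ≠ q → p ≠ ω → q ≠ ω → 0 < M.D ω p q :=
    fun p q h1 h2 h3 => M.pos ω p q h1 h2 h3
  -- geometry around x, x'
  have a7 : sbtw z z' x' := myl1 g1 p5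
  have a6 : sbtw z x' u' := sbtw_trans_left g1 p5
  have a9 : sbtw z x' u := sbtw_trans_right a6 g2
  have a10 : sbtw z x x' := sbtw_trans_left a7 p8
  -- m5 : A < B
  have m5 := (M.mono ω z x' x u nz nx' nx nu (Or.inl ⟨a10, myrot a9⟩)).1
  rw [M.symm ω z x, M.symm ω z x'] at m5
  -- m5 : D x z * D x' u < D x' z * D x u
  have E1 : (M.D ω x z * M.D ω x' u) * (M.D ω y u * M.D ω y' z)
      = (M.D ω x' z * M.D ω x u) * (M.D ω y z * M.D ω y' u) := by
    linear_combination (M.D ω x' u * M.D ω y' z) * hE1 - (M.D ω x u * M.D ω y z) * hE3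
  by_cases hyy : y = y'
  · subst hyy
    have hc : 0 < M.D ω y u * M.D ω y z :=
      mul_pos (dpos y u hyu ny nu) (dpos y z hyz ny nz)
    nlinarith [E1, mul_lt_mul_of_pos_right m5 hc]
  · rcases mytri hyu.symm hyy hy2u.symm with s9 | s9
    · -- bad subcase : sbtw u y y'
      have hm := (M.mono ω u y' y z nu ny' ny nz (Or.inl ⟨s9, myrot q6⟩)).1
      rw [M.symm ω u y, M.symm ω u y'] at hm
      -- hm : D y u * D y' z < D y' u * D y z  (C < Dd)
      have pA : 0 < M.D ω x z * M.D ω x' u :=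
        mul_pos (dpos x z hxz nx nz) (dpos x' u hx2u nx' nu)
      have pC : 0 < M.D ω y u * M.D ω y' z :=
        mul_pos (dpos y u hyu ny nu) (dpos y' z hy2z ny' nz)
      have pDd : 0 < M.D ω y' u * M.D ω y z := pC.trans hm
      have h1 := mul_lt_mul_of_pos_left hm pA
      have h2 := mul_lt_mul_of_pos_right m5 pDd
      nlinarith [E1, h1, h2]
    · -- good subcase : s9 : sbtw y' y u, i.e. order u, y', y
      have s9' : sbtw u y' y := myrot (myrot s9)
      have a5 : sbtw z z' x := myl1 g1 p3
      have a4 : sbtw z x u' := sbtw_trans_left g1 p3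
      have a3 : sbtw z z' u := sbtw_trans_right g1 g2
      have a12 : sbtw z u y' := myrot (myrot q6)
      have m1 := (M.mono ω z x z' x' nz nx nz' nx' (Or.inl ⟨a5, myrot a10⟩)).2
      rw [M.symm ω z x', M.symm ω z x, M.symm ω z' x'] at m1
      -- m1 : D x' z * D x z' < D x z * D x' z'
      have T2b : sbtw u' u x := sbtw_trans_right (myrot g2) (myrot (myrot a4))
      have m2 := (M.mono ω x u' x' u nx nu' nx' nu (Or.inl ⟨myo3 p8 p5, T2b⟩)).2
      rw [M.symm ω u' x'] at m2
      -- m2 : D x u * D x' u' < D x u' * D x' u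
      have T3a : sbtw y' y z := myo3 s9' q4
      have T3b : sbtw z z' y' := sbtw_trans_right a3 a12
      have m3 := (M.mono ω y' z y z' ny' nz ny nz' (Or.inl ⟨T3a, T3b⟩)).2
      rw [M.symm ω z y] at m3
      -- m3 : D y' z' * D y z < D y' z * D y z'
      have T4a : sbtw u' u y' := myl1 (myrot g2) q6
      have hzu'y' : sbtw z u' y' := sbtw_trans_right g2 a12
      have T4b : sbtw y' y u' := sbtw_trans_right T3a (myrot (myrot hzu'y'))
      have m4 := (M.mono ω u' y' u y nu' ny' nu ny (Or.inl ⟨T4a, T4b⟩)).2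
      rw [M.symm ω u' y, M.symm ω u' y', M.symm ω u y] at m4
      -- m4 : D y u' * D y' u < D y' u' * D y u
      have E2 : (M.D ω x z' * M.D ω x' u') * (M.D ω y u' * M.D ω y' z')
          = (M.D ω x' z' * M.D ω x u') * (M.D ω y z' * M.D ω y' u') := by
        linear_combination (M.D ω x' u' * M.D ω y' z') * hE2 - (M.D ω x u' * M.D ω y z') * hE4
      -- positivity
      have pm1 : 0 < M.D ω x' z * M.D ω x z' :=
        mul_pos (dpos x' z hx2z nx' nz) (dpos x z' hxz' nx nz')
      have pm2 : 0 < M.D ω x u * M.D ω x' u' :=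
        mul_pos (dpos x u hxu nx nu) (dpos x' u' hx2u' nx' nu')
      have pm3 : 0 < M.D ω y' z' * M.D ω y z :=
        mul_pos (dpos y' z' hy2z' ny' nz') (dpos y z hyz ny nz)
      have pm4 : 0 < M.D ω y u' * M.D ω y' u :=
        mul_pos (dpos y u' hyu' ny nu') (dpos y' u hy2u ny' nu)
      have P := mul_lt_mul'' m1 m2 pm1.le pm2.le
      -- P : (D x' z * D x z') * (D x u * D x' u') < (D x z * D x' z') * (D x u' * D x' u)
      have Q := mul_lt_mul'' m3 m4 pm3.le pm4.le
      -- Q : (D y' z' * D y z) * (D y u' * D y' u) < (D y' z * D y z') * (D y' u' * D y u)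
      have pC : 0 < M.D ω y u * M.D ω y' z :=
        mul_pos (dpos y u hyu ny nu) (dpos y' z hy2z ny' nz)
      have pC' : 0 < M.D ω y u' * M.D ω y' z' :=
        mul_pos (dpos y u' hyu' ny nu') (dpos y' z' hy2z' ny' nz')
      have pB : 0 < M.D ω x' z * M.D ω x u :=
        mul_pos (dpos x' z hx2z nx' nz) (dpos x u hxu nx nu)
      have pB' : 0 < M.D ω x u' * M.D ω x' z' :=
        mul_pos (dpos x u' hxu' nx nu') (dpos x' z' hx2z' nx' nz')
      -- assemble the contradiction
      have hCC' : 0 < (M.D ω y u * M.D ω y' z) * (M.D ω y u' * M.D ω y' z') :=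
        mul_pos pC pC'
      have hBB' : 0 < (M.D ω x' z * M.D ω x u) * (M.D ω x u' * M.D ω x' z') :=
        mul_pos pB pB'
      have key1 : ((M.D ω x z' * M.D ω x' u') * (M.D ω y u' * M.D ω y' z'))
            * ((M.D ω x' z * M.D ω x u) * (M.D ω y u * M.D ω y' z))
          < ((M.D ω x z * M.D ω x' u) * (M.D ω y u * M.D ω y' z))
            * ((M.D ω x u' * M.D ω x' z') * (M.D ω y u' * M.D ω y' z')) := by
        nlinarith [mul_lt_mul_of_pos_right P hCC']
      rw [E1, E2] at key1
      have QQ := mul_lt_mul_of_pos_left Q hBB'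
      nlinarith [key1, QQ]

lemma main3 (M : MonotoneMobius X) (ω z u z' u' x y x' y' : X)
    (nz : z ≠ ω) (nu : u ≠ ω) (nz' : z' ≠ ω) (nu' : u' ≠ ω)
    (nx : x ≠ ω) (ny : y ≠ ω) (nx' : x' ≠ ω) (ny' : y' ≠ ω)
    (hxz : x ≠ z) (hxu : x ≠ u) (hxz' : x ≠ z') (hxu' : x ≠ u')
    (hyz : y ≠ z) (hyu : y ≠ u) (hyz' : y ≠ z') (hyu' : y ≠ u')
    (hx2z : x' ≠ z) (hx2u : x' ≠ u) (hx2z' : x' ≠ z') (hx2u' : x' ≠ u')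
    (hy2z : y' ≠ z) (hy2u : y' ≠ u) (hy2z' : y' ≠ z') (hy2u' : y' ≠ u')
    (g1 : sbtw z z' u') (g2 : sbtw z u' u)
    (p3 : sbtw z' x u') (p5 : sbtw z' x' u')
    (q4 : sbtw u y z) (q6 : sbtw u y' z)
    (hE1 : M.D ω x z * M.D ω y u = M.D ω x u * M.D ω y z)
    (hE2 : M.D ω x z' * M.D ω y u' = M.D ω x u' * M.D ω y z')
    (hE3 : M.D ω x' z * M.D ω y' u = M.D ω x' u * M.D ω y' z)
    (hE4 : M.D ω x' z' * M.D ω y' u' = M.D ω x' u' * M.D ω y' z') :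
    ({x, y} : Set X) = {x', y'} := by
  by_cases hxx : x = x'
  · subst hxx
    have hyy : y = y' := by
      by_contra hyy
      have e : M.D ω x z * (M.D ω y u * M.D ω y' z)
          = M.D ω x z * (M.D ω y' u * M.D ω y z) := by
        linear_combination (M.D ω y' z) * hE1 - (M.D ω y z) * hE3
      have e' := mul_left_cancel₀ (ne_of_gt (M.pos ω x z hxz nx nz)) e
      rcases mytri hyu.symm hyy hy2u.symm with s | s
      · have hm := (M.mono ω u y' y z nu ny' ny nz (Or.inl ⟨s, myrot q6⟩)).1
        rw [M.symm ω u y, M.symm ω u y'] at hm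
        linarith [e', hm]
      · have hm := (M.mono ω u y y' z nu ny ny' nz (Or.inl ⟨myrot (myrot s), myrot q4⟩)).1
        rw [M.symm ω u y, M.symm ω u y'] at hm
        linarith [e', hm]
    subst hyy
    rfl
  · exfalso
    rcases mytri hxz'.symm hxx hx2z'.symm with p8 | p8
    · exact core4 M ω z u z' u' x y x' y' nz nu nz' nu' nx ny nx' ny'
        hxz hxu hxz' hxu' hyz hyu hyz' hyu' hx2z hx2u hx2z' hx2u' hy2z hy2u hy2z' hy2u'
        g1 g2 p3 p5 q4 q6 p8 hE1 hE2 hE3 hE4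
    · exact core4 M ω z u z' u' x' y' x y nz nu nz' nu' nx' ny' nx ny
        hx2z hx2u hx2z' hx2u' hy2z hy2u hy2z' hy2u' hxz hxu hxz' hxu' hyz hyu hyz' hyu'
        g1 g2 p5 p3 q6 q4 (myrot (myrot p8)) hE3 hE4 hE1 hE2

lemma main2 (M : MonotoneMobius X) (z u z' u' x y x' y' : X)
    (hzu : z ≠ u) (hzu' : z' ≠ u')
    (hxy : x ≠ y) (hxz : x ≠ z) (hxu : x ≠ u) (hxz' : x ≠ z') (hxu' : x ≠ u')
    (hyz : y ≠ z) (hyu : y ≠ u) (hyz' : y ≠ z') (hyu' : y ≠ u')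
    (hxy2 : x' ≠ y') (hx2z : x' ≠ z) (hx2u : x' ≠ u) (hx2z' : x' ≠ z') (hx2u' : x' ≠ u')
    (hy2z : y' ≠ z) (hy2u : y' ≠ u) (hy2z' : y' ≠ z') (hy2u' : y' ≠ u')
    (g1 : sbtw z z' u') (g2 : sbtw z u' u)
    (ha : M.Harmonic x y z u) (ha' : M.Harmonic x y z' u')
    (hb : M.Harmonic x' y' z u) (hb' : M.Harmonic x' y' z' u') :
    ({x, y} : Set X) = {x', y'} := by
  haveI := mob_infinite M
  obtain ⟨ω, hω⟩ := Infinite.exists_notMem_finset ({z, u, z', u', x, y, x', y'} : Finset X)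
  simp only [Finset.mem_insert, Finset.mem_singleton, not_or] at hω
  obtain ⟨nz, nu, nz', nu', nx, ny, nx', ny'⟩ :
      z ≠ ω ∧ u ≠ ω ∧ z' ≠ ω ∧ u' ≠ ω ∧ x ≠ ω ∧ y ≠ ω ∧ x' ≠ ω ∧ y' ≠ ω := by
    refine ⟨?_, ?_, ?_, ?_, ?_, ?_, ?_, ?_⟩ <;> (intro e; subst e; tauto)
  have hE1 := ha ω nx.symm ny.symm nz.symm nu.symm
  have hE2 := ha' ω nx.symm ny.symm nz'.symm nu'.symm
  have hE3 := hb ω nx'.symm ny'.symm nz.symm nu.symm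
  have hE4 := hb' ω nx'.symm ny'.symm nz'.symm nu'.symm
  have sep1 : PairSeparates x y z u :=
    sep_of_harmEq M ω x y z u nx ny nz nu hxy hxz hxu hyz hyu hzu hE1
  have sep2 : PairSeparates x y z' u' :=
    sep_of_harmEq M ω x y z' u' nx ny nz' nu' hxy hxz' hxu' hyz' hyu' hzu' hE2
  have sep3 : PairSeparates x' y' z u :=
    sep_of_harmEq M ω x' y' z u nx' ny' nz nu hxy2 hx2z hx2u hy2z hy2u hzu hE3
  have sep4 : PairSeparates x' y' z' u' :=
    sep_of_harmEq M ω x' y' z' u' nx' ny' nz' nu' hxy2 hx2z' hx2u' hy2z' hy2u' hzu' hE4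
  have dism : ∀ w : X, sbtw u w z → ¬ sbtw z' w u' := fun w hw hc =>
    sbtw_asymm (sbtw_trans_right (sbtw_trans_left g1 hc) g2) hw
  have hE1s : M.D ω y z * M.D ω x u = M.D ω y u * M.D ω x z := by linear_combination -hE1
  have hE2s : M.D ω y z' * M.D ω x u' = M.D ω y u' * M.D ω x z' := by linear_combination -hE2
  have hE3s : M.D ω y' z * M.D ω x' u = M.D ω y' u * M.D ω x' z := by linear_combination -hE3
  have hE4s : M.D ω y' z' * M.D ω x' u' = M.D ω y' u' * M.D ω x' z' := by
    linear_combination -hE4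
  rcases pos_of_sep sep1 with ⟨hx1, hy1⟩ | ⟨hy1, hx1⟩
  · -- x in arc (z,u), y in arc (u,z)
    have p3 : sbtw z' x u' := by
      rcases pos_of_sep sep2 with ⟨h1, h2⟩ | ⟨h1, h2⟩
      · exact h1
      · exact absurd h1 (dism y hy1)
    rcases pos_of_sep sep3 with ⟨hx3, hy3⟩ | ⟨hy3, hx3⟩
    · have p5 : sbtw z' x' u' := by
        rcases pos_of_sep sep4 with ⟨h1, h2⟩ | ⟨h1, h2⟩
        · exact h1
        · exact absurd h1 (dism y' hy3)
      exact main3 M ω z u z' u' x y x' y' nz nu nz' nu' nx ny nx' ny'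
        hxz hxu hxz' hxu' hyz hyu hyz' hyu' hx2z hx2u hx2z' hx2u' hy2z hy2u hy2z' hy2u'
        g1 g2 p3 p5 hy1 hy3 hE1 hE2 hE3 hE4
    · have p5 : sbtw z' y' u' := by
        rcases pos_of_sep sep4 with ⟨h1, h2⟩ | ⟨h1, h2⟩
        · exact absurd h1 (dism x' hx3)
        · exact h1
      rw [show ({x', y'} : Set X) = {y', x'} from Set.pair_comm x' y']
      exact main3 M ω z u z' u' x y y' x' nz nu nz' nu' nx ny ny' nx'
        hxz hxu hxz' hxu' hyz hyu hyz' hyu' hy2z hy2u hy2z' hy2u' hx2z hx2u hx2z' hx2u'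
        g1 g2 p3 p5 hy1 hx3 hE1 hE2 hE3s hE4s
  · -- y in arc (z,u), x in arc (u,z)
    have p3 : sbtw z' y u' := by
      rcases pos_of_sep sep2 with ⟨h1, h2⟩ | ⟨h1, h2⟩
      · exact absurd h1 (dism x hx1)
      · exact h1
    rw [show ({x, y} : Set X) = {y, x} from Set.pair_comm x y]
    rcases pos_of_sep sep3 with ⟨hx3, hy3⟩ | ⟨hy3, hx3⟩
    · have p5 : sbtw z' x' u' := by
        rcases pos_of_sep sep4 with ⟨h1, h2⟩ | ⟨h1, h2⟩
        · exact h1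
        · exact absurd h1 (dism y' hy3)
      exact main3 M ω z u z' u' y x x' y' nz nu nz' nu' ny nx nx' ny'
        hyz hyu hyz' hyu' hxz hxu hxz' hxu' hx2z hx2u hx2z' hx2u' hy2z hy2u hy2z' hy2u'
        g1 g2 p3 p5 hx1 hy3 hE1s hE2s hE3 hE4
    · have p5 : sbtw z' y' u' := by
        rcases pos_of_sep sep4 with ⟨h1, h2⟩ | ⟨h1, h2⟩
        · exact absurd h1 (dism x' hx3)
        · exact h1
      rw [show ({x', y'} : Set X) = {y', x'} from Set.pair_comm x' y']
      exact main3 M ω z u z' u' y x y' x' nz nu nz' nu' ny nx ny' nx'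
        hyz hyu hyz' hyu' hxz hxu hxz' hxu' hy2z hy2u hy2z' hy2u' hx2z hx2u hx2z' hx2u'
        g1 g2 p3 p5 hx1 hx3 hE1s hE2s hE3s hE4s

end Main

/-- Let `M` be a monotone Möbius structure on the circle and let
`b = (z,u)`, `b' = (z',u')` be pairs of distinct points in the strong causal relation. Then
the common perpendicular is unique: there is at most one (unordered) pair `a` such that both
`(a,b)` and `(a,b')` are harmonic. -/
theorem stmt11 {X : Type*} [CircularOrder X] [TopologicalSpace X]
    (M : MonotoneMobius X) (z u z' u' : X)
    (hzu : z ≠ u) (hzu' : z' ≠ u')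
    (hsc : StrongCausal z u z' u')
    (x y x' y' : X)
    (hxy : x ≠ y) (hxz : x ≠ z) (hxu : x ≠ u) (hxz' : x ≠ z') (hxu' : x ≠ u')
    (hyz : y ≠ z) (hyu : y ≠ u) (hyz' : y ≠ z') (hyu' : y ≠ u')
    (hxy2 : x' ≠ y') (hx2z : x' ≠ z) (hx2u : x' ≠ u) (hx2z' : x' ≠ z') (hx2u' : x' ≠ u')
    (hy2z : y' ≠ z) (hy2u : y' ≠ u) (hy2z' : y' ≠ z') (hy2u' : y' ≠ u')
    (ha : M.Harmonic x y z u) (ha' : M.Harmonic x y z' u')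
    (hb : M.Harmonic x' y' z u) (hb' : M.Harmonic x' y' z' u') :
    ({x, y} : Set X) = {x', y'} := by
  rcases hsc with ⟨h1, h2⟩ | ⟨h1, h2⟩ | ⟨h1, h2⟩ | ⟨h1, h2⟩
  · rcases mytri (sbtw_ne12 h1) hzu' (sbtw_ne12 h2) with g | g
    · exact main2 M z u z' u' x y x' y' hzu hzu' hxy hxz hxu hxz' hxu' hyz hyu hyz' hyu'
        hxy2 hx2z hx2u hx2z' hx2u' hy2z hy2u hy2z' hy2u' g h2 ha ha' hb hb'
    · exact main2 M z u u' z' x y x' y' hzu hzu'.symm hxy hxz hxu hxu' hxz' hyz hyu hyu' hyz'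
        hxy2 hx2z hx2u hx2u' hx2z' hy2z hy2u hy2u' hy2z' (myrot (myrot g)) h1
        ha (harm_swap_right ha') hb (harm_swap_right hb')
  · rcases mytri (sbtw_ne12 h1) hzu' (sbtw_ne12 h2) with g | g
    · exact main2 M u z z' u' x y x' y' hzu.symm hzu' hxy hxu hxz hxz' hxu' hyu hyz hyz' hyu'
        hxy2 hx2u hx2z hx2z' hx2u' hy2u hy2z hy2z' hy2u' g h2
        (harm_swap_right ha) ha' (harm_swap_right hb) hb'
    · exact main2 M u z u' z' x y x' y' hzu.symm hzu'.symm hxy hxu hxz hxu' hxz'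
        hyu hyz hyu' hyz' hxy2 hx2u hx2z hx2u' hx2z' hy2u hy2z hy2u' hy2z'
        (myrot (myrot g)) h1 (harm_swap_right ha) (harm_swap_right ha')
        (harm_swap_right hb) (harm_swap_right hb')
  · rcases mytri (sbtw_ne12 h1) hzu (sbtw_ne12 h2) with g | g
    · exact main2 M z' u' z u x y x' y' hzu' hzu hxy hxz' hxu' hxz hxu hyz' hyu' hyz hyu
        hxy2 hx2z' hx2u' hx2z hx2u hy2z' hy2u' hy2z hy2u g h2 ha' ha hb' hb
    · exact main2 M z' u' u z x y x' y' hzu' hzu.symm hxy hxz' hxu' hxu hxz hyz' hyu' hyu hyz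
        hxy2 hx2z' hx2u' hx2u hx2z hy2z' hy2u' hy2u hy2z (myrot (myrot g)) h1
        ha' (harm_swap_right ha) hb' (harm_swap_right hb)
  · rcases mytri (sbtw_ne12 h1) hzu (sbtw_ne12 h2) with g | g
    · exact main2 M u' z' z u x y x' y' hzu'.symm hzu hxy hxu' hxz' hxz hxu hyu' hyz' hyz hyu
        hxy2 hx2u' hx2z' hx2z hx2u hy2u' hy2z' hy2z hy2u g h2
        (harm_swap_right ha') ha (harm_swap_right hb') hb
    · exact main2 M u' z' u z x y x' y' hzu'.symm hzu.symm hxy hxu' hxz' hxu hxz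
        hyu' hyz' hyu hyz hxy2 hx2u' hx2z' hx2u hx2z hy2u' hy2z' hy2u hy2z
        (myrot (myrot g)) h1 (harm_swap_right ha') (harm_swap_right ha)
        (harm_swap_right hb') (harm_swap_right hb)
end
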